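/- arXiv:1506.08246 — 7 statements merged into one kernel-verified Lean document; each statement's English description precedes it below -/
import Mathlib

section
/- Let C be a closed convex set in ℝⁿ, x ∉ C, y ∈ C, and λ ∈ [0,1]. Then ‖y - (P_C(x) + λ(P_C(x) - x))‖ ≤ ‖y - x‖, where P_C(x) is the metric projection of x onto C. Moreover, the inequality is strict if λ ∈ [0,1). -/
open scoped RealInnerProductSpace
open Metric

/-!
The variational inequality for the metric projection says that `⟪y - p, p - x⟫ ≥ 0` for every
`y ∈ C`. Writing `a = y - p` and `b = p - x`, the two distances compare via
`‖a + b‖² - ‖a - λ b‖² = (1 - λ²)‖b‖² + 2(1 + λ)⟪a, b⟫`, which is nonnegative for `|λ| ≤ 1`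
and positive for `|λ| < 1` as soon as `b ≠ 0`, i.e. `x ∉ C`.
-/

section InnerProductSpace

variable {F : Type*} [NormedAddCommGroup F] [InnerProductSpace ℝ F]

theorem real_inner_sub_le_zero_of_dist_eq_infDist {K : Set F} (hK : Convex ℝ K) {u v w : F}
    (hv : v ∈ K) (huv : dist u v = infDist u K) (hw : w ∈ K) : ⟪u - v, w - v⟫ ≤ 0 := by
  refine (norm_eq_iInf_iff_real_inner_le_zero hK hv).mp ?_ w hw
  simpa only [← dist_eq_norm, infDist_eq_iInf] using huv

theorem norm_add_sq_sub_norm_sub_smul_sq (a b : F) (t : ℝ) :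
    ‖a + b‖ ^ 2 - ‖a - t • b‖ ^ 2 = (1 - t ^ 2) * ‖b‖ ^ 2 + 2 * (1 + t) * ⟪a, b⟫ := by
  rw [norm_add_sq_real, norm_sub_sq_real, real_inner_smul_right, norm_smul, Real.norm_eq_abs,
    mul_pow, sq_abs]
  ring

theorem norm_sub_smul_le_norm_add {a b : F} (hab : 0 ≤ ⟪a, b⟫) {t : ℝ} (ht : |t| ≤ 1) :
    ‖a - t • b‖ ≤ ‖a + b‖ := by
  obtain ⟨ht₀, ht₁⟩ := abs_le.mp ht
  have hsq : 0 ≤ 1 - t ^ 2 := by nlinarith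
  refine (pow_le_pow_iff_left₀ (norm_nonneg _) (norm_nonneg _) two_ne_zero).mp ?_
  have := norm_add_sq_sub_norm_sub_smul_sq a b t
  have : 0 ≤ (1 - t ^ 2) * ‖b‖ ^ 2 := by positivity
  have : 0 ≤ 2 * (1 + t) * ⟪a, b⟫ := mul_nonneg (by linarith) hab
  linarith

theorem norm_sub_smul_lt_norm_add {a b : F} (hab : 0 ≤ ⟪a, b⟫) (hb : b ≠ 0) {t : ℝ}
    (ht : |t| < 1) : ‖a - t • b‖ < ‖a + b‖ := by
  obtain ⟨ht₀, ht₁⟩ := abs_lt.mp ht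
  have hsq : 0 < 1 - t ^ 2 := by nlinarith
  refine (pow_lt_pow_iff_left₀ (norm_nonneg _) (norm_nonneg _) two_ne_zero).mp ?_
  have := norm_add_sq_sub_norm_sub_smul_sq a b t
  have : 0 < (1 - t ^ 2) * ‖b‖ ^ 2 := by have := norm_pos_iff.mpr hb; positivity
  have : 0 ≤ 2 * (1 + t) * ⟪a, b⟫ := mul_nonneg (by linarith) hab
  linarith

end InnerProductSpace

theorem fejer_monotonicity_general {n : ℕ} (C : Set (EuclideanSpace ℝ (Fin n)))
    (hCconv : Convex ℝ C)
    (x y p : EuclideanSpace ℝ (Fin n)) (hx : x ∉ C) (hy : y ∈ C)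
    (hp : p ∈ C) (hproj : dist x p = infDist x C) (lam : ℝ) (hlam : lam ∈ Set.Icc (0:ℝ) 1) :
    ‖y - (p + lam • (p - x))‖ ≤ ‖y - x‖ ∧
      (lam < 1 → ‖y - (p + lam • (p - x))‖ < ‖y - x‖) := by
  obtain ⟨hlam₀, hlam₁⟩ := hlam
  have hinner : 0 ≤ ⟪y - p, p - x⟫ := by
    have := real_inner_sub_le_zero_of_dist_eq_infDist hCconv hp hproj hy
    rw [← neg_sub x p, inner_neg_right, real_inner_comm]
    linarith
  have hpx : p - x ≠ 0 := sub_ne_zero.mpr fun h => hx (h ▸ hp)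
  rw [show y - (p + lam • (p - x)) = (y - p) - lam • (p - x) by abel,
    show y - x = (y - p) + (p - x) by abel]
  exact ⟨norm_sub_smul_le_norm_add hinner (abs_le.mpr ⟨by linarith, hlam₁⟩),
    fun hlt => norm_sub_smul_lt_norm_add hinner hpx (abs_lt.mpr ⟨by linarith, hlt⟩)⟩

/-- Fejér monotonicity principle: if `C` is a closed convex set, `x ∉ C`, `y ∈ C`,
`p` is the metric projection of `x` onto `C`, and `λ ∈ [0,1]`, then
`‖y - (p + λ(p - x))‖ ≤ ‖y - x‖`, with strict inequality when `λ < 1`. -/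
theorem fejer_monotonicity {n : ℕ} (C : Set (EuclideanSpace ℝ (Fin n)))
    (hCne : C.Nonempty) (hCc : IsClosed C) (hCconv : Convex ℝ C)
    (x y p : EuclideanSpace ℝ (Fin n)) (hx : x ∉ C) (hy : y ∈ C)
    (hp : p ∈ C) (hproj : dist x p = infDist x C) (lam : ℝ) (hlam : lam ∈ Set.Icc (0:ℝ) 1) :
    ‖y - (p + lam • (p - x))‖ ≤ ‖y - x‖ ∧
      (lam < 1 → ‖y - (p + lam • (p - x))‖ < ‖y - x‖) :=
  fejer_monotonicity_general C hCconv x y p hx hy hp hproj lam hlam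
end

section
/- Let v₁, …, v_k be unit vectors in ℝⁿ, α ≥ 0, and define halfspaces Hᵢ = {x : ⟨vᵢ, x⟩ ≤ α}. Suppose η := min{‖Σᵢ λᵢ vᵢ‖ : λᵢ ≥ 0, Σᵢ λᵢ = 1} > 0. Let v = (Σᵢ λᵢ vᵢ)/‖Σᵢ λᵢ vᵢ‖ for some nonzero λ ∈ ℝ^k with nonnegative components, and let H = {x : ⟨v, x⟩ ≤ α/η}. Then ∩ᵢ₌₁^k Hᵢ ⊆ H. -/
open scoped RealInnerProductSpace

/-! Summing the constraints `⟪vᵢ, x⟫ ≤ α` with weights `λᵢ ≥ 0` gives `⟪∑ λᵢ vᵢ, x⟫ ≤ (∑ λᵢ) α`,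
while rescaling `λ` to a convex combination gives `η ∑ λᵢ ≤ ‖∑ λᵢ vᵢ‖`. Together,
`⟪∑ λᵢ vᵢ, x⟫ ≤ (α / η) ‖∑ λᵢ vᵢ‖`, and dividing by the norm gives the claim. -/

section

variable {ι E : Type*} [Fintype ι]

theorem mul_sum_le_norm_sum_smul [SeminormedAddCommGroup E] [NormedSpace ℝ E]
    {v : ι → E} {η : ℝ}
    (hη : ∀ lam : ι → ℝ, (∀ i, 0 ≤ lam i) → ∑ i, lam i = 1 → η ≤ ‖∑ i, lam i • v i‖)
    {lam : ι → ℝ} (hlam : ∀ i, 0 ≤ lam i) :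
    η * ∑ i, lam i ≤ ‖∑ i, lam i • v i‖ := by
  rcases (Finset.sum_nonneg fun i _ => hlam i : 0 ≤ ∑ i, lam i).eq_or_lt with hS | hS
  · rw [← hS, mul_zero]
    exact norm_nonneg _
  have hconv := hη (fun i => (∑ j, lam j)⁻¹ * lam i)
    (fun i => mul_nonneg (inv_nonneg.2 hS.le) (hlam i))
    (by rw [← Finset.mul_sum, inv_mul_cancel₀ hS.ne'])
  simp only [mul_smul, ← Finset.smul_sum, norm_smul, norm_inv, Real.norm_of_nonneg hS.le] at hconv
  rwa [le_inv_mul_iff₀ hS, mul_comm] at hconv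

variable [SeminormedAddCommGroup E] [InnerProductSpace ℝ E]

theorem inner_sum_smul_le {v : ι → E} {x : E} {α : ℝ} (hx : ∀ i, ⟪v i, x⟫ ≤ α)
    {lam : ι → ℝ} (hlam : ∀ i, 0 ≤ lam i) :
    ⟪∑ i, lam i • v i, x⟫ ≤ (∑ i, lam i) * α := by
  rw [sum_inner, Finset.sum_mul]
  gcongr with i
  rw [real_inner_smul_left]
  exact mul_le_mul_of_nonneg_left (hx i) (hlam i)

theorem inner_norm_inv_smul_le {u x : E} {c : ℝ} (hc : 0 ≤ c) (h : ⟪u, x⟫ ≤ c * ‖u‖) :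
    ⟪‖u‖⁻¹ • u, x⟫ ≤ c := by
  rw [real_inner_smul_left]
  calc ‖u‖⁻¹ * ⟪u, x⟫ ≤ ‖u‖⁻¹ * (c * ‖u‖) := by gcongr
    _ = c * (‖u‖⁻¹ * ‖u‖) := by ring
    _ ≤ c := mul_le_of_le_one_right hc (inv_mul_le_one_of_le₀ le_rfl (norm_nonneg u))

end

theorem derived_halfspace_containment_general {n k : ℕ}
    (v : Fin k → EuclideanSpace ℝ (Fin n))
    (α η : ℝ) (hα : 0 ≤ α) (hη : 0 < η)
    (hηmin : ∀ lam : Fin k → ℝ, (∀ i, 0 ≤ lam i) → (∑ i, lam i) = 1 →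
      η ≤ ‖∑ i, lam i • v i‖)
    (lam : Fin k → ℝ) (hlam : ∀ i, 0 ≤ lam i) :
    (⋂ i, {x : EuclideanSpace ℝ (Fin n) | ⟪v i, x⟫ ≤ α}) ⊆
      {x | ⟪‖∑ i, lam i • v i‖⁻¹ • ∑ i, lam i • v i, x⟫ ≤ α / η} := by
  intro x hx
  simp only [Set.mem_iInter, Set.mem_ofPred_eq] at hx ⊢
  refine inner_norm_inv_smul_le (div_nonneg hα hη.le) ?_
  calc ⟪∑ i, lam i • v i, x⟫ ≤ (∑ i, lam i) * α := inner_sum_smul_le hx hlam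
    _ = α / η * (η * ∑ i, lam i) := by field_simp
    _ ≤ α / η * ‖∑ i, lam i • v i‖ := by
      gcongr
      exact mul_sum_le_norm_sum_smul hηmin hlam

/-- Derived halfspace containment: with unit vectors `v i`, halfspaces
`Hᵢ = {x : ⟪vᵢ, x⟫ ≤ α}`, and `η > 0` a lower bound for `‖∑ λᵢ vᵢ‖` over convex
combinations, any normalized nonnegative combination `w` of the `vᵢ` yields
`⋂ᵢ Hᵢ ⊆ {x : ⟪w, x⟫ ≤ α/η}`. -/
theorem derived_halfspace_containment {n k : ℕ}
    (v : Fin k → EuclideanSpace ℝ (Fin n)) (hv : ∀ i, ‖v i‖ = 1)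
    (α η : ℝ) (hα : 0 ≤ α) (hη : 0 < η)
    (hηmin : ∀ lam : Fin k → ℝ, (∀ i, 0 ≤ lam i) → (∑ i, lam i) = 1 →
      η ≤ ‖∑ i, lam i • v i‖)
    (lam : Fin k → ℝ) (hlam : ∀ i, 0 ≤ lam i) (hlamne : lam ≠ 0) :
    (⋂ i, {x : EuclideanSpace ℝ (Fin n) | ⟪v i, x⟫ ≤ α}) ⊆
      {x | ⟪‖∑ i, lam i • v i‖⁻¹ • ∑ i, lam i • v i, x⟫ ≤ α / η} :=
  derived_halfspace_containment_general v α η hα hη hηmin lam hlam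
end

section
/- Let C ⊆ ℝⁿ be a closed set that is Clarke regular at x̄ ∈ C, i.e., the regular normal cone and limiting normal cone coincide at every point of C near x̄ (or at least at x̄, with outer semicontinuity of the normal cone map). Then for every ε > 0 there exists δ > 0 such that for every x ∈ (B(x̄, δ) ∩ C) \ {x̄} and every unit vector v ∈ N_C(x), one has ⟨v, x - x̄⟩ ≤ ε ‖x - x̄‖. -/
/-!
Argue by contradiction: bad points `xₖ → x̄` come with unit normals `vₖ ∈ N_C(xₖ)`, regular by
Clarke regularity near `x̄`. A subsequence of the `vₖ` converges on the unit sphere to some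
`a ∈ N_C(x̄) = N̂_C(x̄)`. Writing `⟪vₖ, xₖ - x̄⟫ = ⟪a, xₖ - x̄⟫ + ⟪vₖ - a, xₖ - x̄⟫`, the first
term is `o(‖xₖ - x̄‖)` because `a` is a regular normal at `x̄`, and the second is at most
`‖vₖ - a‖ ‖xₖ - x̄‖`, so eventually `⟪vₖ, xₖ - x̄⟫ ≤ ε ‖xₖ - x̄‖`.
-/

open scoped RealInnerProductSpace Topology
open Metric Filter

/-- The regular (Fréchet) normal cone of `C` at `x`. -/
def regNormalCone {n : ℕ} (C : Set (EuclideanSpace ℝ (Fin n)))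
    (x : EuclideanSpace ℝ (Fin n)) : Set (EuclideanSpace ℝ (Fin n)) :=
  {v | ∀ ε > 0, ∃ δ > 0, ∀ y ∈ C, ‖y - x‖ < δ → ⟪v, y - x⟫ ≤ ε * ‖y - x‖}

/-- The limiting normal cone of `C` at `x`: limits of regular normals at points of `C`
converging to `x`. -/
def limNormalCone {n : ℕ} (C : Set (EuclideanSpace ℝ (Fin n)))
    (x : EuclideanSpace ℝ (Fin n)) : Set (EuclideanSpace ℝ (Fin n)) :=
  {v | ∃ xs vs : ℕ → EuclideanSpace ℝ (Fin n), (∀ i, xs i ∈ C) ∧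
    Tendsto xs atTop (nhds x) ∧ (∀ i, vs i ∈ regNormalCone C (xs i)) ∧
    Tendsto vs atTop (nhds v)}

theorem eventually_inner_le_of_mem_regNormalCone {n : ℕ} {ι : Type*} {l : Filter ι}
    {C : Set (EuclideanSpace ℝ (Fin n))} {xbar a : EuclideanSpace ℝ (Fin n)}
    (ha : a ∈ regNormalCone C xbar) {xs vs : ι → EuclideanSpace ℝ (Fin n)}
    (hxC : ∀ᶠ i in l, xs i ∈ C) (hxs : Tendsto xs l (𝓝 xbar)) (hvs : Tendsto vs l (𝓝 a))
    {ε : ℝ} (hε : 0 < ε) :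
    ∀ᶠ i in l, ⟪vs i, xs i - xbar⟫ ≤ ε * ‖xs i - xbar‖ := by
  obtain ⟨δ, hδ, hsupport⟩ := ha (ε / 2) (half_pos hε)
  have hxs_near : ∀ᶠ i in l, ‖xs i - xbar‖ < δ := by
    simpa only [dist_eq_norm] using Metric.tendsto_nhds.1 hxs δ hδ
  have hvs_near : ∀ᶠ i in l, ‖vs i - a‖ < ε / 2 := by
    simpa only [dist_eq_norm] using Metric.tendsto_nhds.1 hvs (ε / 2) (half_pos hε)
  filter_upwards [hxC, hxs_near, hvs_near] with i hi hxi hvi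
  calc ⟪vs i, xs i - xbar⟫ = ⟪a, xs i - xbar⟫ + ⟪vs i - a, xs i - xbar⟫ := by
        rw [inner_sub_left]; ring
    _ ≤ ε / 2 * ‖xs i - xbar‖ + ‖vs i - a‖ * ‖xs i - xbar‖ :=
        add_le_add (hsupport _ hi hxi) (real_inner_le_norm _ _)
    _ ≤ ε / 2 * ‖xs i - xbar‖ + ε / 2 * ‖xs i - xbar‖ := by gcongr
    _ = ε * ‖xs i - xbar‖ := by ring

theorem supporting_hyperplane_near_point_general {n : ℕ}
    (C : Set (EuclideanSpace ℝ (Fin n)))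
    (xbar : EuclideanSpace ℝ (Fin n)) (hxbar : xbar ∈ C)
    (hClarke : ∃ r > 0, ∀ x ∈ C ∩ closedBall xbar r,
      regNormalCone C x = limNormalCone C x) :
    ∀ ε > 0, ∃ δ > 0, ∀ x ∈ closedBall xbar δ ∩ C, x ≠ xbar →
      ∀ v ∈ limNormalCone C x, ‖v‖ = 1 → ⟪v, x - xbar⟫ ≤ ε * ‖x - xbar‖ := by
  obtain ⟨r, hr, hreg⟩ := hClarke
  intro ε hε
  suffices hgood : ∀ᶠ x in 𝓝 xbar, x ∈ C → x ≠ xbar →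
      ∀ v ∈ limNormalCone C x, ‖v‖ = 1 → ⟪v, x - xbar⟫ ≤ ε * ‖x - xbar‖ by
    obtain ⟨δ, hδ, hball⟩ := nhds_basis_closedBall.eventually_iff.1 hgood
    exact ⟨δ, hδ, fun x hx => hball hx.1 hx.2⟩
  by_contra hbad
  obtain ⟨xs, hxs, hbad⟩ := frequently_iff_seq_forall.1
    ((not_eventually.1 hbad).and_eventually (closedBall_mem_nhds xbar hr))
  push Not at hbad
  choose hbad hxs_ball using hbad
  choose hxC _ vs hvs_lim hvs_norm hvs_gt using hbad
  have hvs_reg i : vs i ∈ regNormalCone C (xs i) := by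
    rw [hreg _ ⟨hxC i, hxs_ball i⟩]; exact hvs_lim i
  obtain ⟨a, -, φ, hφ, hvsφ⟩ := (isCompact_sphere (0 : EuclideanSpace ℝ (Fin n)) 1).tendsto_subseq
    (x := vs) fun i => mem_sphere_zero_iff_norm.2 (hvs_norm i)
  have hxsφ := hxs.comp hφ.tendsto_atTop
  have ha : a ∈ regNormalCone C xbar := by
    rw [hreg xbar ⟨hxbar, mem_closedBall_self hr.le⟩]
    exact ⟨xs ∘ φ, vs ∘ φ, fun i => hxC (φ i), hxsφ, fun i => hvs_reg (φ i), hvsφ⟩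
  obtain ⟨k, hk⟩ := (eventually_inner_le_of_mem_regNormalCone ha
    (.of_forall fun i => hxC (φ i)) hxsφ hvsφ hε).exists
  exact (hvs_gt (φ k)).not_ge hk

/-- Supporting hyperplane near a point: if `C` is closed and Clarke regular at `x̄ ∈ C`
(near `x̄` the regular and limiting normal cones coincide), then for every `ε > 0` there is
`δ > 0` such that for every `x ∈ B(x̄,δ) ∩ C`, `x ≠ x̄`, and unit `v ∈ N_C(x)`,
`⟪v, x - x̄⟫ ≤ ε ‖x - x̄‖`. -/
theorem supporting_hyperplane_near_point {n : ℕ}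
    (C : Set (EuclideanSpace ℝ (Fin n))) (hC : IsClosed C)
    (xbar : EuclideanSpace ℝ (Fin n)) (hxbar : xbar ∈ C)
    (hClarke : ∃ r > 0, ∀ x ∈ C ∩ closedBall xbar r,
      regNormalCone C x = limNormalCone C x) :
    ∀ ε > 0, ∃ δ > 0, ∀ x ∈ closedBall xbar δ ∩ C, x ≠ xbar →
      ∀ v ∈ limNormalCone C x, ‖v‖ = 1 → ⟪v, x - xbar⟫ ≤ ε * ‖x - xbar‖ :=
  supporting_hyperplane_near_point_general C xbar hxbar hClarke
end

section
/- Let K₁, …, K_m ⊆ ℝⁿ be closed sets having linearly regular intersection at x̄ ∈ K = ∩ K_l (i.e., if Σ v_l = 0 with v_l ∈ N_{K_l}(x̄) then all v_l = 0). Then there exist δ > 0 and M′ > 0 such that whenever x ∈ B(x̄, δ) ∩ K, v_l ∈ N_{K_l}(x) for each l, and v = Σ v_l, one has max_l ‖v_l‖ ≤ M′ ‖v‖. -/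
/-!
The limiting normal cone has closed graph, being the closure of the graph of the regular normal
cone, and it is a cone. Hence so is `x ↦ ∏ₗ N_{K_l}(x)`, and linear regularity says the summation
map does not vanish on its unit vectors at `x̄`. By compactness of the unit sphere and the tube
lemma, `‖∑ₗ vₗ‖` stays above some `ε > 0` on unit tuples of normals at all points near `x̄`, and
homogeneity gives the bound with `M′ = ε⁻¹`.
-/

open scoped RealInnerProductSpace
open Metric Filter

open Topology

section ClosedGraph

variable {X : Type*} [TopologicalSpace X]

-- Adjoining `ε` as a coordinate lets the tube lemma choose it together with the neighbourhood.
lemma exists_pos_eventually_lt_of_isClosed_graph {Y : Type*} [TopologicalSpace Y]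
    {S : X → Set Y} (hS : IsClosed {p : X × Y | p.2 ∈ S p.1}) {K : Set Y} (hK : IsCompact K)
    {f : Y → ℝ} (hf : Continuous f) {x₀ : X} (hpos : ∀ y ∈ K, y ∈ S x₀ → 0 < f y) :
    ∃ ε > 0, ∀ᶠ x in 𝓝 x₀, ∀ y ∈ K, y ∈ S x → ε < f y := by
  have local_bound : ∀ y ∈ K,
      ∀ᶠ q : (ℝ × X) × Y in 𝓝 ((0, x₀), y), q.2 ∈ S q.1.2 → q.1.1 < f q.2 := by
    intro y hy
    by_cases hSy : y ∈ S x₀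
    · exact (ContinuousAt.eventually_lt (by fun_prop) (by fun_prop) (hpos y hy hSy)).mono
        fun _ h _ => h
    · have : ∀ᶠ q : X × Y in 𝓝 (x₀, y), q.2 ∉ S q.1 := hS.isOpen_compl.mem_nhds hSy
      exact ((by fun_prop : Continuous fun q : (ℝ × X) × Y => (q.1.2, q.2)).tendsto _
        |>.eventually this).mono fun _ h h' => (h h').elim
  have uniform : ∀ᶠ q : ℝ × X in 𝓝 (0, x₀), ∀ y ∈ K, y ∈ S q.2 → q.1 < f y :=
    hK.eventually_forall_of_forall_eventually
      (P := fun (q : ℝ × X) (y : Y) => y ∈ S q.2 → q.1 < f y) local_bound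
  obtain ⟨ε, hε, hεpos⟩ := ((eventually_nhdsWithin_of_eventually_nhds uniform.curry_nhds).and
    self_mem_nhdsWithin).exists (f := 𝓝[>] (0 : ℝ))
  exact ⟨ε, hεpos, hε⟩

lemma exists_pos_eventually_norm_le_mul_norm_of_isClosed_graph
    {F G : Type*} [NormedAddCommGroup F] [NormedSpace ℝ F] [ProperSpace F]
    [NormedAddCommGroup G] [NormedSpace ℝ G]
    {S : X → Set F} (hS : IsClosed {p : X × F | p.2 ∈ S p.1})
    (hS_smul : ∀ x, ∀ v ∈ S x, ∀ c : ℝ, 0 < c → c • v ∈ S x)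
    (A : F →L[ℝ] G) {x₀ : X} (hx₀ : ∀ v ∈ S x₀, A v = 0 → v = 0) :
    ∃ M > 0, ∀ᶠ x in 𝓝 x₀, ∀ v ∈ S x, ‖v‖ ≤ M * ‖A v‖ := by
  obtain ⟨ε, hε, hεx⟩ := exists_pos_eventually_lt_of_isClosed_graph hS
    (isCompact_sphere (0 : F) 1) (f := fun u => ‖A u‖) (by fun_prop)
    fun u hu hSu => norm_pos_iff.2 fun hAu => ne_zero_of_mem_unit_sphere ⟨u, hu⟩ (hx₀ u hSu hAu)
  refine ⟨ε⁻¹, inv_pos.2 hε, hεx.mono fun x hx v hv => ?_⟩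
  rcases eq_or_ne v 0 with rfl | hv0
  · simp
  have hvpos : 0 < ‖v‖ := norm_pos_iff.2 hv0
  have hunit := hx (‖v‖⁻¹ • v) (by simp [norm_smul, hvpos.ne'])
    (hS_smul x v hv _ (inv_pos.2 hvpos))
  rw [map_smul, norm_smul, norm_inv, norm_norm, inv_mul_eq_div, lt_div_iff₀ hvpos] at hunit
  rw [inv_mul_eq_div, le_div_iff₀ hε]
  linarith

end ClosedGraph

section NormalCone

variable {n : ℕ} {C : Set (EuclideanSpace ℝ (Fin n))} {x v : EuclideanSpace ℝ (Fin n)}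

lemma regNormalCone_smul (hv : v ∈ regNormalCone C x) {c : ℝ} (hc : 0 < c) :
    c • v ∈ regNormalCone C x := by
  intro ε hε
  obtain ⟨δ, hδ, hδv⟩ := hv (ε / c) (by positivity)
  refine ⟨δ, hδ, fun y hy hyx => ?_⟩
  calc ⟪c • v, y - x⟫ = c * ⟪v, y - x⟫ := real_inner_smul_left _ _ _
    _ ≤ c * (ε / c * ‖y - x‖) := by gcongr; exact hδv y hy hyx
    _ = ε * ‖y - x‖ := by field_simp

lemma limNormalCone_smul (hv : v ∈ limNormalCone C x) {c : ℝ} (hc : 0 < c) :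
    c • v ∈ limNormalCone C x := by
  obtain ⟨xs, vs, hxsC, hxs, hvs_reg, hvs⟩ := hv
  exact ⟨xs, c • vs, hxsC, hxs, fun i => regNormalCone_smul (hvs_reg i) hc, hvs.const_smul c⟩

lemma graph_limNormalCone_eq_closure :
    {p : EuclideanSpace ℝ (Fin n) × EuclideanSpace ℝ (Fin n) | p.2 ∈ limNormalCone C p.1} =
      closure {p | p.1 ∈ C ∧ p.2 ∈ regNormalCone C p.1} := by
  ext ⟨x, v⟩
  simp only [Set.mem_ofPred_eq, mem_closure_iff_seq_limit, nhds_prod_eq, tendsto_prod_iff',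
    limNormalCone]
  constructor
  · rintro ⟨xs, vs, hxsC, hxs, hvs_reg, hvs⟩
    exact ⟨fun i => (xs i, vs i), fun i => ⟨hxsC i, hvs_reg i⟩, hxs, hvs⟩
  · rintro ⟨ps, hps, hxs, hvs⟩
    exact ⟨_, _, fun i => (hps i).1, hxs, fun i => (hps i).2, hvs⟩

lemma isClosed_graph_limNormalCone :
    IsClosed {p : EuclideanSpace ℝ (Fin n) × EuclideanSpace ℝ (Fin n) |
      p.2 ∈ limNormalCone C p.1} :=
  graph_limNormalCone_eq_closure ▸ isClosed_closure

lemma isClosed_graph_pi_limNormalCone {m : ℕ} (K : Fin m → Set (EuclideanSpace ℝ (Fin n))) :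
    IsClosed {p : EuclideanSpace ℝ (Fin n) × (Fin m → EuclideanSpace ℝ (Fin n)) |
      ∀ l, p.2 l ∈ limNormalCone (K l) p.1} := by
  simp only [Set.ofPred_forall]
  exact isClosed_iInter fun l => isClosed_graph_limNormalCone.preimage
    (f := fun p : EuclideanSpace ℝ (Fin n) × (Fin m → EuclideanSpace ℝ (Fin n)) => (p.1, p.2 l))
    (by fun_prop)

end NormalCone

theorem normals_bounded_by_sum_general {n m : ℕ}
    (K : Fin m → Set (EuclideanSpace ℝ (Fin n)))
    (xbar : EuclideanSpace ℝ (Fin n))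
    (hlinreg : ∀ v : Fin m → EuclideanSpace ℝ (Fin n),
      (∀ l, v l ∈ limNormalCone (K l) xbar) → (∑ l, v l) = 0 → ∀ l, v l = 0) :
    ∃ δ > 0, ∃ M' > 0, ∀ x ∈ closedBall xbar δ ∩ ⋂ l, K l,
      ∀ v : Fin m → EuclideanSpace ℝ (Fin n), (∀ l, v l ∈ limNormalCone (K l) x) →
        ∀ l, ‖v l‖ ≤ M' * ‖∑ l', v l'‖ := by
  let sumMap : (Fin m → EuclideanSpace ℝ (Fin n)) →L[ℝ] EuclideanSpace ℝ (Fin n) :=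
    ∑ l, ContinuousLinearMap.proj l
  have sumMap_apply (v : Fin m → EuclideanSpace ℝ (Fin n)) : sumMap v = ∑ l, v l := by
    simp [sumMap]
  obtain ⟨M, hM, hMx⟩ := exists_pos_eventually_norm_le_mul_norm_of_isClosed_graph
    (S := fun x => {v : Fin m → EuclideanSpace ℝ (Fin n) | ∀ l, v l ∈ limNormalCone (K l) x})
    (isClosed_graph_pi_limNormalCone K) (fun x v hv c hc l => limNormalCone_smul (hv l) hc)
    sumMap fun v hv hv0 => funext (hlinreg v hv ((sumMap_apply v).symm.trans hv0))
  obtain ⟨δ, hδ, hδM⟩ := nhds_basis_closedBall.eventually_iff.1 hMx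
  refine ⟨δ, hδ, M, hM, fun x hx v hv l => ?_⟩
  calc ‖v l‖ ≤ ‖v‖ := norm_le_pi_norm v l
    _ ≤ M * ‖∑ l', v l'‖ := sumMap_apply v ▸ hδM hx.1 v hv

/-- Under linearly regular intersection at `x̄`, normals at nearby points of the
intersection are uniformly bounded by their sum: there exist `δ > 0` and `M′ > 0` such
that `x ∈ B(x̄,δ) ∩ K`, `v_l ∈ N_{K_l}(x)` imply `‖v_l‖ ≤ M′ ‖∑ v_l‖` for all `l`. -/
theorem normals_bounded_by_sum {n m : ℕ}
    (K : Fin m → Set (EuclideanSpace ℝ (Fin n))) (hK : ∀ l, IsClosed (K l))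
    (xbar : EuclideanSpace ℝ (Fin n)) (hxbar : xbar ∈ ⋂ l, K l)
    (hlinreg : ∀ v : Fin m → EuclideanSpace ℝ (Fin n),
      (∀ l, v l ∈ limNormalCone (K l) xbar) → (∑ l, v l) = 0 → ∀ l, v l = 0) :
    ∃ δ > 0, ∃ M' > 0, ∀ x ∈ closedBall xbar δ ∩ ⋂ l, K l,
      ∀ v : Fin m → EuclideanSpace ℝ (Fin n), (∀ l, v l ∈ limNormalCone (K l) x) →
        ∀ l, ‖v l‖ ≤ M' * ‖∑ l', v l'‖ :=
  normals_bounded_by_sum_general K xbar hlinreg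
end

section
/- Let K₁, …, K_m ⊆ ℝⁿ be closed sets, each having the SOSH property at x̄ ∈ K := ∩ K_l, and suppose {K_l} has linearly regular intersection at x̄. Assume additionally that for x ∈ K near x̄ the normal cone satisfies N_K(x) = Σ_l N_{K_l}(x). Then K has the SOSH property at x̄: there exist δ > 0 and M″ > 0 such that for all x ∈ B(x̄, δ) ∩ K and unit v ∈ N_K(x), ⟨v, x - x̄⟩ ≤ M″ ‖x - x̄‖². -/
open scoped RealInnerProductSpace
open Metric Filter

/-! Near `x̄` a normal `v` of `K = ⋂ K_l` splits as `v = ∑ w_l` with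
`w_l ∈ N_{K_l}(x)`, and each `⟪w_l, x - x̄⟫` is at most `M ‖w_l‖ ‖x - x̄‖²` by SOSH of `K_l`.
It remains to bound `∑ ‖w_l‖` by a multiple of `‖v‖`. The pairs `(x, w)` of normal tuples are
a closed set, since the graph of the limiting normal cone is closed; on its compact part with
`∑ ‖w_l‖ = 1` and `x` near `x̄`, the continuous function `‖∑ w_l‖ + ‖x - x̄‖` is positive by
linear regularity, hence bounded below by some `c > 0`, which gives `c ∑ ‖w_l‖ ≤ ‖∑ w_l‖`
for `x` close to `x̄`. -/

section NormalCones

open scoped Topology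

variable {n : ℕ} {ι : Type*}

def IsSOSHAt (C : Set (EuclideanSpace ℝ (Fin n))) (xbar : EuclideanSpace ℝ (Fin n)) : Prop :=
  ∃ δ > 0, ∃ M > 0, ∀ x ∈ closedBall xbar δ ∩ C,
    ∀ v ∈ limNormalCone C x, ⟪v, x - xbar⟫ ≤ M * ‖v‖ * ‖x - xbar‖ ^ 2

def IsLinearlyRegularAt [Fintype ι] (K : ι → Set (EuclideanSpace ℝ (Fin n)))
    (xbar : EuclideanSpace ℝ (Fin n)) : Prop :=
  ∀ v : ι → EuclideanSpace ℝ (Fin n),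
    (∀ l, v l ∈ limNormalCone (K l) xbar) → ∑ l, v l = 0 → ∀ l, v l = 0

def regNormalGraph (C : Set (EuclideanSpace ℝ (Fin n))) :
    Set (EuclideanSpace ℝ (Fin n) × EuclideanSpace ℝ (Fin n)) :=
  {p | p.1 ∈ C ∧ p.2 ∈ regNormalCone C p.1}

theorem mem_limNormalCone_iff_mem_closure {C : Set (EuclideanSpace ℝ (Fin n))}
    {x v : EuclideanSpace ℝ (Fin n)} :
    v ∈ limNormalCone C x ↔ (x, v) ∈ closure (regNormalGraph C) := by
  rw [mem_closure_iff_seq_limit]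
  constructor
  · rintro ⟨xs, vs, hxsC, hxs, hvs, hvsv⟩
    exact ⟨fun i => (xs i, vs i), fun i => ⟨hxsC i, hvs i⟩, hxs.prodMk_nhds hvsv⟩
  · rintro ⟨p, hp, hpt⟩
    exact ⟨fun i => (p i).1, fun i => (p i).2, fun i => (hp i).1, hpt.fst_nhds,
      fun i => (hp i).2, hpt.snd_nhds⟩

theorem isClosed_setOf_forall_mem_limNormalCone (K : ι → Set (EuclideanSpace ℝ (Fin n))) :
    IsClosed {p : EuclideanSpace ℝ (Fin n) × (ι → EuclideanSpace ℝ (Fin n)) |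
      ∀ l, p.2 l ∈ limNormalCone (K l) p.1} := by
  simp_rw [mem_limNormalCone_iff_mem_closure, Set.ofPred_forall]
  exact isClosed_iInter fun l => isClosed_closure.preimage
    (continuous_fst.prodMk ((continuous_apply l).comp continuous_snd))

theorem smul_mem_regNormalCone {C : Set (EuclideanSpace ℝ (Fin n))}
    {x v : EuclideanSpace ℝ (Fin n)} {t : ℝ} (ht : 0 < t) (hv : v ∈ regNormalCone C x) :
    t • v ∈ regNormalCone C x := by
  intro ε hε
  obtain ⟨δ, hδ, h⟩ := hv (ε / t) (by positivity)
  refine ⟨δ, hδ, fun y hy hyx => ?_⟩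
  calc ⟪t • v, y - x⟫ = t * ⟪v, y - x⟫ := real_inner_smul_left _ _ _
    _ ≤ t * (ε / t * ‖y - x‖) := by gcongr; exact h y hy hyx
    _ = ε * ‖y - x‖ := by field_simp

theorem smul_mem_limNormalCone {C : Set (EuclideanSpace ℝ (Fin n))}
    {x v : EuclideanSpace ℝ (Fin n)} {t : ℝ} (ht : 0 < t) (hv : v ∈ limNormalCone C x) :
    t • v ∈ limNormalCone C x := by
  obtain ⟨xs, vs, hxsC, hxs, hvs, hvsv⟩ := hv
  exact ⟨xs, fun i => t • vs i, hxsC, hxs, fun i => smul_mem_regNormalCone ht (hvs i),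
    hvsv.const_smul t⟩

theorem IsSOSHAt.exists_uniform [Finite ι] {K : ι → Set (EuclideanSpace ℝ (Fin n))}
    {xbar : EuclideanSpace ℝ (Fin n)} (h : ∀ l, IsSOSHAt (K l) xbar) :
    ∃ δ > 0, ∃ M > 0, ∀ l, ∀ x ∈ closedBall xbar δ ∩ K l,
      ∀ v ∈ limNormalCone (K l) x, ⟪v, x - xbar⟫ ≤ M * ‖v‖ * ‖x - xbar‖ ^ 2 := by
  choose δ hδ M _ hSOSH using h
  obtain ⟨δ', hδ'δ, hδ'⟩ := ((eventually_all.2 fun l =>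
    nhdsWithin_le_nhds (eventually_le_nhds (hδ l))).and
      (self_mem_nhdsWithin : ∀ᶠ t in 𝓝[>] (0 : ℝ), 0 < t)).exists
  obtain ⟨M', hMM', hM'⟩ := ((eventually_all.2 fun l => eventually_ge_atTop (M l)).and
    (eventually_gt_atTop 0)).exists
  refine ⟨δ', hδ', M', hM', fun l x hx v hv => ?_⟩
  calc ⟪v, x - xbar⟫ ≤ M l * ‖v‖ * ‖x - xbar‖ ^ 2 :=
        hSOSH l x ⟨closedBall_subset_closedBall (hδ'δ l) hx.1, hx.2⟩ v hv
    _ ≤ M' * ‖v‖ * ‖x - xbar‖ ^ 2 := by gcongr; exact hMM' l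

namespace IsLinearlyRegularAt

variable [Fintype ι] {K : ι → Set (EuclideanSpace ℝ (Fin n))} {xbar : EuclideanSpace ℝ (Fin n)}

theorem exists_le_norm_sum (hK : IsLinearlyRegularAt K xbar) :
    ∃ δ > 0, ∃ c > 0, ∀ x ∈ closedBall xbar δ, ∀ w : ι → EuclideanSpace ℝ (Fin n),
      (∀ l, w l ∈ limNormalCone (K l) x) → ∑ l, ‖w l‖ = 1 → c ≤ ‖∑ l, w l‖ := by
  set Q := {p : EuclideanSpace ℝ (Fin n) × (ι → EuclideanSpace ℝ (Fin n)) |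
    (∀ l, p.2 l ∈ limNormalCone (K l) p.1) ∧ ∑ l, ‖p.2 l‖ = 1 ∧ p.1 ∈ closedBall xbar 1}
  have hQ : IsCompact Q := by
    refine ((isCompact_closedBall xbar 1).prod (isCompact_closedBall 0 1)).of_isClosed_subset
      ((isClosed_setOf_forall_mem_limNormalCone K).inter ((isClosed_eq (by fun_prop)
        continuous_const).inter (isClosed_closedBall.preimage continuous_fst))) ?_
    rintro ⟨x, w⟩ ⟨-, hw, hx⟩
    refine ⟨hx, ?_⟩
    rw [mem_closedBall, dist_zero_right, pi_norm_le_iff_of_nonneg zero_le_one]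
    exact fun l => hw ▸ Finset.single_le_sum (fun i _ => norm_nonneg (w i)) (Finset.mem_univ l)
  have hpos : ∀ p ∈ Q, 0 < ‖∑ l, p.2 l‖ + dist p.1 xbar := by
    rintro ⟨x, w⟩ ⟨hw, hw1, -⟩
    by_contra! h
    have hx : x = xbar := dist_le_zero.1 (by linarith [norm_nonneg (∑ l, w l)])
    have hsum : ∑ l, w l = 0 := norm_le_zero_iff.1 (by linarith [dist_nonneg (x := x) (y := xbar)])
    subst hx
    simp [hK w hw hsum] at hw1
  obtain ⟨c, hc, hcQ⟩ := hQ.exists_forall_le' (by fun_prop) hpos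
  refine ⟨min 1 (c / 2), by positivity, c / 2, by positivity, fun x hx w hw hw1 => ?_⟩
  have hxc : dist x xbar ≤ c / 2 := (mem_closedBall.1 hx).trans (min_le_right _ _)
  linarith [hcQ (x, w) ⟨hw, hw1, closedBall_subset_closedBall (min_le_left _ _) hx⟩]

theorem exists_mul_sum_norm_le_norm_sum (hK : IsLinearlyRegularAt K xbar) :
    ∃ δ > 0, ∃ c > 0, ∀ x ∈ closedBall xbar δ, ∀ w : ι → EuclideanSpace ℝ (Fin n),
      (∀ l, w l ∈ limNormalCone (K l) x) → c * ∑ l, ‖w l‖ ≤ ‖∑ l, w l‖ := by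
  obtain ⟨δ, hδ, c, hc, h⟩ := hK.exists_le_norm_sum
  refine ⟨δ, hδ, c, hc, fun x hx w hw => ?_⟩
  rcases (Finset.sum_nonneg fun l _ => norm_nonneg (w l)).eq_or_lt with hs | hs
  · rw [← hs, mul_zero]
    exact norm_nonneg _
  · set s := ∑ l, ‖w l‖
    have hnorm : ∑ l, ‖s⁻¹ • w l‖ = 1 := by
      simp only [norm_smul, norm_inv, Real.norm_of_nonneg hs.le, ← Finset.mul_sum]
      exact inv_mul_cancel₀ hs.ne'
    have := h x hx _ (fun l => smul_mem_limNormalCone (inv_pos.2 hs) (hw l)) hnorm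
    rw [← Finset.smul_sum, norm_smul, norm_inv, Real.norm_of_nonneg hs.le,
      le_inv_mul_iff₀ hs] at this
    linarith

end IsLinearlyRegularAt

end NormalCones

theorem SOSH_intersection_general {n m : ℕ}
    (K : Fin m → Set (EuclideanSpace ℝ (Fin n)))
    (xbar : EuclideanSpace ℝ (Fin n))
    (hSOSH : ∀ l, ∃ δ > 0, ∃ M > 0, ∀ x ∈ closedBall xbar δ ∩ K l,
      ∀ v ∈ limNormalCone (K l) x, ⟪v, x - xbar⟫ ≤ M * ‖v‖ * ‖x - xbar‖ ^ 2)
    (hlinreg : ∀ v : Fin m → EuclideanSpace ℝ (Fin n),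
      (∀ l, v l ∈ limNormalCone (K l) xbar) → (∑ l, v l) = 0 → ∀ l, v l = 0)
    (hsum : ∃ δ₀ > 0, ∀ x ∈ closedBall xbar δ₀ ∩ ⋂ l, K l,
      limNormalCone (⋂ l, K l) x =
        {v | ∃ w : Fin m → EuclideanSpace ℝ (Fin n),
          (∀ l, w l ∈ limNormalCone (K l) x) ∧ v = ∑ l, w l}) :
    ∃ δ > 0, ∃ M'' > 0, ∀ x ∈ closedBall xbar δ ∩ ⋂ l, K l,
      ∀ v ∈ limNormalCone (⋂ l, K l) x, ‖v‖ = 1 →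
        ⟪v, x - xbar⟫ ≤ M'' * ‖x - xbar‖ ^ 2 := by
  obtain ⟨δ₀, hδ₀, hsum⟩ := hsum
  obtain ⟨δ₁, hδ₁, M, hM, hSOSH⟩ := IsSOSHAt.exists_uniform hSOSH
  obtain ⟨δ₂, hδ₂, c, hc, hsplit⟩ :=
    IsLinearlyRegularAt.exists_mul_sum_norm_le_norm_sum (K := K) hlinreg
  refine ⟨min δ₀ (min δ₁ δ₂), by positivity, M / c, by positivity, ?_⟩
  rintro x ⟨hx, hxK⟩ v hv hv1
  simp only [mem_closedBall, le_min_iff] at hx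
  obtain ⟨hx₀, hx₁, hx₂⟩ := hx
  rw [hsum x ⟨hx₀, hxK⟩] at hv
  obtain ⟨w, hw, rfl⟩ := hv
  have hw_le : ∑ l, ‖w l‖ ≤ 1 / c := by
    rw [le_div_iff₀ hc]
    linarith [hsplit x hx₂ w hw]
  calc ⟪∑ l, w l, x - xbar⟫ = ∑ l, ⟪w l, x - xbar⟫ := sum_inner _ _ _
    _ ≤ ∑ l, M * ‖w l‖ * ‖x - xbar‖ ^ 2 := Finset.sum_le_sum fun l _ =>
        hSOSH l x ⟨hx₁, Set.mem_iInter.1 hxK l⟩ (w l) (hw l)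
    _ = M * (∑ l, ‖w l‖) * ‖x - xbar‖ ^ 2 := by rw [Finset.mul_sum, Finset.sum_mul]
    _ ≤ M * (1 / c) * ‖x - xbar‖ ^ 2 := by gcongr
    _ = M / c * ‖x - xbar‖ ^ 2 := by ring

/-- SOSH under intersection: if each `K_l` is SOSH at `x̄ ∈ K = ⋂ K_l`, the sets have
linearly regular intersection at `x̄`, and the normal cone of `K` near `x̄` is the sum of
the normal cones of the `K_l`, then `K` is SOSH at `x̄`. -/
theorem SOSH_intersection {n m : ℕ}
    (K : Fin m → Set (EuclideanSpace ℝ (Fin n))) (hK : ∀ l, IsClosed (K l))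
    (xbar : EuclideanSpace ℝ (Fin n)) (hxbar : xbar ∈ ⋂ l, K l)
    (hSOSH : ∀ l, ∃ δ > 0, ∃ M > 0, ∀ x ∈ closedBall xbar δ ∩ K l,
      ∀ v ∈ limNormalCone (K l) x, ⟪v, x - xbar⟫ ≤ M * ‖v‖ * ‖x - xbar‖ ^ 2)
    (hlinreg : ∀ v : Fin m → EuclideanSpace ℝ (Fin n),
      (∀ l, v l ∈ limNormalCone (K l) xbar) → (∑ l, v l) = 0 → ∀ l, v l = 0)
    (hsum : ∃ δ₀ > 0, ∀ x ∈ closedBall xbar δ₀ ∩ ⋂ l, K l,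
      limNormalCone (⋂ l, K l) x =
        {v | ∃ w : Fin m → EuclideanSpace ℝ (Fin n),
          (∀ l, w l ∈ limNormalCone (K l) x) ∧ v = ∑ l, w l}) :
    ∃ δ > 0, ∃ M'' > 0, ∀ x ∈ closedBall xbar δ ∩ ⋂ l, K l,
      ∀ v ∈ limNormalCone (⋂ l, K l) x, ‖v‖ = 1 →
        ⟪v, x - xbar⟫ ≤ M'' * ‖x - xbar‖ ^ 2 :=
  SOSH_intersection_general K xbar hSOSH hlinreg hsum
end

section
/- Let C ⊆ ℝⁿ be closed and super-regular at x̄ ∈ C with parameter δ ∈ (0,1) on a neighborhood V (i.e., ⟨z - y, v⟩ ≤ δ‖z-y‖‖v‖ for z,y ∈ C ∩ V, v ∈ N_C(y)). Suppose x′ ∈ V, x ∈ P_C(x′) ∩ V, x̄ ∈ C ∩ V, and x′ = x + t v with t = ‖x′ - x‖ > 0 and v a unit normal in N_C(x). Then ‖x - x̄‖ ≤ (1/√(1-δ²)) ‖x′ - x̄‖. -/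
open scoped RealInnerProductSpace
open Metric Filter

/-- `C` is super-regular at `x̄` (Lewis–Luke–Malick): for all `δ > 0` there is a
neighborhood `V` of `x̄` with `⟪z - y, v⟫ ≤ δ‖z - y‖‖v‖` for all `z, y ∈ C ∩ V` and
`v ∈ N_C(y)`. -/
def SuperRegularAt {n : ℕ} (C : Set (EuclideanSpace ℝ (Fin n)))
    (xbar : EuclideanSpace ℝ (Fin n)) : Prop :=
  ∀ δ > 0, ∃ V ∈ nhds xbar, ∀ z ∈ C ∩ V, ∀ y ∈ C ∩ V, ∀ v ∈ limNormalCone C y,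
    ⟪z - y, v⟫ ≤ δ * ‖z - y‖ * ‖v‖

/-! Super-regularity bounds by `δ` the cosine of the angle at `x` between `x̄ - x` and the normal
direction `v`. The law of cosines then gives
`‖x' - x̄‖² ≥ ‖x - x̄‖² - 2 δ t ‖x - x̄‖ + t² ≥ (1 - δ²) ‖x - x̄‖²`,
the middle expression being smallest at `t = δ ‖x - x̄‖`. -/

section InnerProductSpace

variable {E : Type*} [NormedAddCommGroup E] [InnerProductSpace ℝ E]

theorem real_inner_smul_right_le_of_inner_le {u v : E} {δ t : ℝ} (ht : 0 ≤ t)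
    (h : ⟪u, v⟫ ≤ δ * ‖u‖ * ‖v‖) : ⟪u, t • v⟫ ≤ δ * ‖u‖ * ‖t • v‖ := by
  rw [real_inner_smul_right, norm_smul, Real.norm_of_nonneg ht]
  calc t * ⟪u, v⟫ ≤ t * (δ * ‖u‖ * ‖v‖) := mul_le_mul_of_nonneg_left h ht
    _ = δ * ‖u‖ * (t * ‖v‖) := by ring

theorem one_sub_sq_mul_norm_sub_sq_le {x z w : E} {δ : ℝ}
    (h : ⟪z - x, w⟫ ≤ δ * ‖z - x‖ * ‖w‖) :
    (1 - δ ^ 2) * ‖x - z‖ ^ 2 ≤ ‖x + w - z‖ ^ 2 := by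
  have hexpand : ‖x + w - z‖ ^ 2 = ‖x - z‖ ^ 2 - 2 * ⟪z - x, w⟫ + ‖w‖ ^ 2 := by
    rw [show x + w - z = (x - z) + w by abel, norm_add_sq_real, ← neg_sub z x, inner_neg_left]
    ring
  rw [hexpand, norm_sub_rev x z]
  nlinarith [sq_nonneg (‖w‖ - δ * ‖z - x‖)]

theorem norm_sub_le_one_div_sqrt_mul_of_inner_le {x z w : E} {δ : ℝ} (hδ : δ ^ 2 < 1)
    (h : ⟪z - x, w⟫ ≤ δ * ‖z - x‖ * ‖w‖) :
    ‖x - z‖ ≤ 1 / Real.sqrt (1 - δ ^ 2) * ‖x + w - z‖ := by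
  have hpos : 0 < Real.sqrt (1 - δ ^ 2) := Real.sqrt_pos.mpr (by linarith)
  rw [one_div_mul_eq_div, le_div_iff₀ hpos, mul_comm]
  refine (pow_le_pow_iff_left₀ (by positivity) (norm_nonneg _) two_ne_zero).mp ?_
  rw [mul_pow, Real.sq_sqrt (by linarith)]
  exact one_sub_sq_mul_norm_sub_sq_le h

end InnerProductSpace

theorem superregular_projection_length_bound_general {n : ℕ}
    (C : Set (EuclideanSpace ℝ (Fin n)))
    (xbar : EuclideanSpace ℝ (Fin n)) (δ : ℝ) (hδ : δ ∈ Set.Ioo (0:ℝ) 1)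
    (V : Set (EuclideanSpace ℝ (Fin n)))
    (hsr : ∀ z ∈ C ∩ V, ∀ y ∈ C ∩ V, ∀ v ∈ limNormalCone C y,
      ⟪z - y, v⟫ ≤ δ * ‖z - y‖ * ‖v‖)
    (hxbarC : xbar ∈ C ∩ V)
    (x' x v : EuclideanSpace ℝ (Fin n)) (t : ℝ)
    (hxC : x ∈ C) (hxV : x ∈ V)
    (hvN : v ∈ limNormalCone C x)
    (htpos : 0 < t) (hx' : x' = x + t • v) :
    ‖x - xbar‖ ≤ (1 / Real.sqrt (1 - δ ^ 2)) * ‖x' - xbar‖ := by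
  have hδsq : δ ^ 2 < 1 := by nlinarith [hδ.1, hδ.2]
  have hangle : ⟪xbar - x, t • v⟫ ≤ δ * ‖xbar - x‖ * ‖t • v‖ :=
    real_inner_smul_right_le_of_inner_le htpos.le (hsr xbar hxbarC x ⟨hxC, hxV⟩ v hvN)
  rw [hx']
  exact norm_sub_le_one_div_sqrt_mul_of_inner_le hδsq hangle

/-- Under a uniform super-regularity bound with parameter `δ ∈ (0,1)` on `V`: if `x` is a
projection of `x′` onto `C`, both in `V`, `x̄ ∈ C ∩ V`, and `x′ = x + t v` with `v` a unit
normal of `C` at `x` and `t = ‖x′ - x‖ > 0`, then `‖x - x̄‖ ≤ (1/√(1-δ²)) ‖x′ - x̄‖`. -/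
theorem superregular_projection_length_bound {n : ℕ}
    (C : Set (EuclideanSpace ℝ (Fin n))) (hCc : IsClosed C)
    (xbar : EuclideanSpace ℝ (Fin n)) (δ : ℝ) (hδ : δ ∈ Set.Ioo (0:ℝ) 1)
    (V : Set (EuclideanSpace ℝ (Fin n))) (hV : V ∈ nhds xbar)
    (hsr : ∀ z ∈ C ∩ V, ∀ y ∈ C ∩ V, ∀ v ∈ limNormalCone C y,
      ⟪z - y, v⟫ ≤ δ * ‖z - y‖ * ‖v‖)
    (hxbarC : xbar ∈ C ∩ V)
    (x' x v : EuclideanSpace ℝ (Fin n)) (t : ℝ)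
    (hx'V : x' ∈ V) (hxC : x ∈ C) (hxV : x ∈ V)
    (hproj : dist x' x = infDist x' C)
    (hvN : v ∈ limNormalCone C x) (hv : ‖v‖ = 1)
    (ht : t = ‖x' - x‖) (htpos : 0 < t) (hx' : x' = x + t • v) :
    ‖x - xbar‖ ≤ (1 / Real.sqrt (1 - δ ^ 2)) * ‖x' - xbar‖ :=
  superregular_projection_length_bound_general C xbar δ hδ V hsr hxbarC x' x v t hxC hxV hvN htpos
    hx'
end

section
/- Let K₁, K₂ ⊆ ℝⁿ be closed, x* ∈ K = K₁ ∩ K₂, with the hypotheses of the 2-SHQP setting: super-regularity bound (1) with parameter δ and local metric inequality (2) with constant β on V. With x₁ ∈ P_{K₁}(x₀), x₂ ∈ P_{K₂}(x₁), and B(x₂, β‖x₂ - x₁‖) ⊆ V, every point y ∈ B(x₂, β‖x₂ - x₁‖) ∩ K satisfies ⟨y - x₂, x₁ - x₂⟩ ≤ βδ‖x₁ - x₂‖². Consequently B(x₂, β‖x₂ - x₁‖) ∩ K ⊆ H₂ := {x : ⟨x - x₂, x₁ - x₂⟩ ≤ βδ‖x₁ - x₂‖²}, and this intersection is nonempty.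 -/
/-!
The difference `x₁ - x₂` is a proximal, hence regular, hence limiting normal to `K₂` at its
projection `x₂`, so super-regularity of `K₂` bounds `⟪y - x₂, x₁ - x₂⟫` by
`δ ‖x₁ - x₂‖ ‖y - x₂‖ ≤ βδ ‖x₁ - x₂‖²` on the ball. The ball meets `K` because the metric
inequality at `x₂ ∈ K₂` gives `d(x₂, K) ≤ β d(x₂, K₁) ≤ β ‖x₂ - x₁‖`, and `K` is closed, so
this distance is attained.
-/

open scoped RealInnerProductSpace
open Metric Filter

theorem two_mul_inner_le_norm_sq_of_norm_sub_le {E : Type*} [NormedAddCommGroup E]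
    [InnerProductSpace ℝ E] {x y z : E} (h : ‖x - y‖ ≤ ‖x - z‖) :
    2 * ⟪x - y, z - y⟫ ≤ ‖z - y‖ ^ 2 := by
  have hsq := pow_le_pow_left₀ (norm_nonneg _) h 2
  rw [show x - z = (x - y) - (z - y) by abel, norm_sub_sq_real (x - y) (z - y)] at hsq
  linarith

theorem Metric.infDist_le_mul_dist_of_le_mul_max {α : Type*} [PseudoMetricSpace α]
    {K₁ K₂ : Set α} {β : ℝ} (hβ : 0 ≤ β) {x₁ x₂ : α} (hx₁ : x₁ ∈ K₁) (hx₂ : x₂ ∈ K₂)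
    (h : infDist x₂ (K₁ ∩ K₂) ≤ β * max (infDist x₂ K₁) (infDist x₂ K₂)) :
    infDist x₂ (K₁ ∩ K₂) ≤ β * dist x₂ x₁ := by
  refine h.trans (mul_le_mul_of_nonneg_left ?_ hβ)
  rw [infDist_zero_of_mem hx₂]
  exact max_le (infDist_le_dist_of_mem hx₁) dist_nonneg

theorem IsClosed.closedBall_inter_nonempty_of_infDist_le {α : Type*} [PseudoMetricSpace α]
    [ProperSpace α] {C : Set α} (hC : IsClosed C) (hne : C.Nonempty) {x : α} {r : ℝ}
    (h : infDist x C ≤ r) : (closedBall x r ∩ C).Nonempty := by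
  obtain ⟨z, hzC, hz⟩ := hC.exists_infDist_eq_dist hne x
  exact ⟨z, by rwa [mem_closedBall, dist_comm, ← hz], hzC⟩

section NormalCone

variable {n : ℕ} {C : Set (EuclideanSpace ℝ (Fin n))}

theorem sub_mem_regNormalCone_of_dist_eq_infDist {x p : EuclideanSpace ℝ (Fin n)}
    (hp : dist x p = infDist x C) : x - p ∈ regNormalCone C p := by
  intro ε hε
  refine ⟨2 * ε, by positivity, fun z hz hzp => ?_⟩
  have hxp : ‖x - p‖ ≤ ‖x - z‖ := by
    rw [← dist_eq_norm, ← dist_eq_norm, hp]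
    exact infDist_le_dist_of_mem hz
  nlinarith [two_mul_inner_le_norm_sq_of_norm_sub_le hxp, norm_nonneg (z - p)]

theorem mem_limNormalCone_of_mem_regNormalCone {x v : EuclideanSpace ℝ (Fin n)} (hx : x ∈ C)
    (hv : v ∈ regNormalCone C x) : v ∈ limNormalCone C x :=
  ⟨fun _ => x, fun _ => v, fun _ => hx, tendsto_const_nhds, fun _ => hv, tendsto_const_nhds⟩

theorem inner_sub_le_of_dist_eq_infDist {V : Set (EuclideanSpace ℝ (Fin n))} {δ r : ℝ}
    (hδ : 0 ≤ δ)
    (hC : ∀ y ∈ C ∩ V, ∀ z ∈ C ∩ V, ∀ v ∈ limNormalCone C z, ⟪v, y - z⟫ ≤ δ * ‖v‖ * ‖y - z‖)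
    {x p y : EuclideanSpace ℝ (Fin n)} (hp : p ∈ C ∩ V) (hxp : dist x p = infDist x C)
    (hy : y ∈ C ∩ V) (hyr : ‖y - p‖ ≤ r) :
    ⟪y - p, x - p⟫ ≤ δ * ‖x - p‖ * r := by
  have hnormal := mem_limNormalCone_of_mem_regNormalCone hp.1
    (sub_mem_regNormalCone_of_dist_eq_infDist hxp)
  calc ⟪y - p, x - p⟫ = ⟪x - p, y - p⟫ := real_inner_comm _ _
    _ ≤ δ * ‖x - p‖ * ‖y - p‖ := hC y hy p hp _ hnormal
    _ ≤ δ * ‖x - p‖ * r := by gcongr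

end NormalCone

theorem two_SHQP_halfspace_containment_general {n : ℕ}
    (K₁ K₂ : Set (EuclideanSpace ℝ (Fin n))) (hK₁ : IsClosed K₁) (hK₂ : IsClosed K₂)
    (xstar : EuclideanSpace ℝ (Fin n)) (hxstar : xstar ∈ K₁ ∩ K₂)
    (δ β : ℝ) (hδ : δ ∈ Set.Ioo (0:ℝ) 1) (hβ : 1 ≤ β)
    (V : Set (EuclideanSpace ℝ (Fin n)))
    (h1 : ∀ K ∈ ({K₁, K₂} : Set (Set (EuclideanSpace ℝ (Fin n)))),
      ∀ y ∈ K ∩ V, ∀ z ∈ K ∩ V, ∀ v ∈ limNormalCone K z,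
        ⟪v, y - z⟫ ≤ δ * ‖v‖ * ‖y - z‖)
    (h2 : ∀ x ∈ V, infDist x (K₁ ∩ K₂) ≤ β * max (infDist x K₁) (infDist x K₂))
    (x₁ x₂ : EuclideanSpace ℝ (Fin n))
    (hx₁ : x₁ ∈ K₁)
    (hx₂ : x₂ ∈ K₂) (hx₂p : dist x₁ x₂ = infDist x₁ K₂)
    (hball : closedBall x₂ (β * ‖x₂ - x₁‖) ⊆ V) :
    (∀ y ∈ closedBall x₂ (β * ‖x₂ - x₁‖) ∩ (K₁ ∩ K₂),
        ⟪y - x₂, x₁ - x₂⟫ ≤ β * δ * ‖x₁ - x₂‖ ^ 2) ∧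
      closedBall x₂ (β * ‖x₂ - x₁‖) ∩ (K₁ ∩ K₂) ⊆
        {x | ⟪x - x₂, x₁ - x₂⟫ ≤ β * δ * ‖x₁ - x₂‖ ^ 2} ∧
      (closedBall x₂ (β * ‖x₂ - x₁‖) ∩ (K₁ ∩ K₂)).Nonempty := by
  have hβ0 : 0 ≤ β := zero_le_one.trans hβ
  have hx₂V : x₂ ∈ V := hball (mem_closedBall_self (by positivity))
  have hbound : ∀ y ∈ closedBall x₂ (β * ‖x₂ - x₁‖) ∩ (K₁ ∩ K₂),
      ⟪y - x₂, x₁ - x₂⟫ ≤ β * δ * ‖x₁ - x₂‖ ^ 2 := by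
    rintro y ⟨hyball, -, hyK₂⟩
    have hyr : ‖y - x₂‖ ≤ β * ‖x₁ - x₂‖ := by
      rw [← dist_eq_norm, norm_sub_rev]
      exact mem_closedBall.mp hyball
    calc ⟪y - x₂, x₁ - x₂⟫ ≤ δ * ‖x₁ - x₂‖ * (β * ‖x₁ - x₂‖) :=
          inner_sub_le_of_dist_eq_infDist hδ.1.le (h1 K₂ (by simp)) ⟨hx₂, hx₂V⟩ hx₂p
            ⟨hyK₂, hball hyball⟩ hyr
      _ = β * δ * ‖x₁ - x₂‖ ^ 2 := by ring
  refine ⟨hbound, hbound, (hK₁.inter hK₂).closedBall_inter_nonempty_of_infDist_le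
    ⟨xstar, hxstar⟩ ?_⟩
  simpa only [dist_eq_norm] using infDist_le_mul_dist_of_le_mul_max hβ0 hx₁ hx₂ (h2 x₂ hx₂V)

/-- In the 2-SHQP setting, every `y ∈ B(x₂, β‖x₂-x₁‖) ∩ K` satisfies
`⟪y - x₂, x₁ - x₂⟫ ≤ βδ‖x₁-x₂‖²`; consequently `B(x₂, β‖x₂-x₁‖) ∩ K ⊆ H₂` and this
intersection is nonempty. -/
theorem two_SHQP_halfspace_containment {n : ℕ}
    (K₁ K₂ : Set (EuclideanSpace ℝ (Fin n))) (hK₁ : IsClosed K₁) (hK₂ : IsClosed K₂)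
    (xstar : EuclideanSpace ℝ (Fin n)) (hxstar : xstar ∈ K₁ ∩ K₂)
    (δ β : ℝ) (hδ : δ ∈ Set.Ioo (0:ℝ) 1) (hβ : 1 ≤ β)
    (V : Set (EuclideanSpace ℝ (Fin n))) (hV : V ∈ nhds xstar)
    (h1 : ∀ K ∈ ({K₁, K₂} : Set (Set (EuclideanSpace ℝ (Fin n)))),
      ∀ y ∈ K ∩ V, ∀ z ∈ K ∩ V, ∀ v ∈ limNormalCone K z,
        ⟪v, y - z⟫ ≤ δ * ‖v‖ * ‖y - z‖)
    (h2 : ∀ x ∈ V, infDist x (K₁ ∩ K₂) ≤ β * max (infDist x K₁) (infDist x K₂))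
    (x₀ x₁ x₂ : EuclideanSpace ℝ (Fin n))
    (hx₀ : x₀ ∈ V)
    (hx₁ : x₁ ∈ K₁) (hx₁p : dist x₀ x₁ = infDist x₀ K₁)
    (hx₂ : x₂ ∈ K₂) (hx₂p : dist x₁ x₂ = infDist x₁ K₂)
    (hball : closedBall x₂ (β * ‖x₂ - x₁‖) ⊆ V) :
    (∀ y ∈ closedBall x₂ (β * ‖x₂ - x₁‖) ∩ (K₁ ∩ K₂),
        ⟪y - x₂, x₁ - x₂⟫ ≤ β * δ * ‖x₁ - x₂‖ ^ 2) ∧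
      closedBall x₂ (β * ‖x₂ - x₁‖) ∩ (K₁ ∩ K₂) ⊆
        {x | ⟪x - x₂, x₁ - x₂⟫ ≤ β * δ * ‖x₁ - x₂‖ ^ 2} ∧
      (closedBall x₂ (β * ‖x₂ - x₁‖) ∩ (K₁ ∩ K₂)).Nonempty :=
  two_SHQP_halfspace_containment_general K₁ K₂ hK₁ hK₂ xstar hxstar δ β hδ hβ V h1 h2 x₁ x₂ hx₁ hx₂
    hx₂p hball
end
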